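/- arXiv:2508.02914 — 2 statements merged into one kernel-verified Lean document; each statement's English description precedes it below -/
import Mathlib

section
/- Let F be a field, n a natural number, ε ≥ 0 a real number, and let M, N : (ℝⁿ, ≤) ⥤ ModuleCat F be pointwise finite-dimensional n-parameter persistence modules. Let S_ε : (ℝⁿ, ≤) ⥤ (ℝⁿ, ≤) be the functor induced by the monotone map t ↦ t + ε·𝟙 (where 𝟙 is the all-ones vector). Suppose φ : M ⟶ S_ε ⋙ N and ψ : N ⟶ S_ε ⋙ M are natural transformations such that for every t ∈ ℝⁿ, ψ.app (t + ε·𝟙) ∘ φ.app t = M(t ≤ t + 2ε·𝟙) and φ.app (t + ε·𝟙) ∘ ψ.app t = N(t ≤ t + 2ε·𝟙). Then for all a ≤ b in ℝⁿ: rank M(a ≤ b + 2ε·𝟙) ≤ rank N(a + ε·𝟙 ≤ b + ε·𝟙), and rank N(a ≤ b + 2ε·𝟙) ≤ rank M(a + ε·𝟙 ≤ b + ε·𝟙). -/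
open CategoryTheory

/-- The parameter space `ℝⁿ` with the coordinatewise (product) partial order,
viewed below as a poset category. -/
def ParamSpace (n : ℕ) : Type := Fin n → ℝ

instance (n : ℕ) : PartialOrder (ParamSpace n) :=
  inferInstanceAs (PartialOrder (Fin n → ℝ))

/-- Translation of a parameter point by `ε` times the all-ones vector:
`tr n ε t = t + ε·𝟙`. -/
def tr (n : ℕ) (ε : ℝ) : ParamSpace n → ParamSpace n := fun t i => t i + ε

lemma tr_mono (n : ℕ) (ε : ℝ) : Monotone (tr n ε) := by
  intro a b h i
  exact add_le_add (h i) (le_refl ε)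

lemma le_tr (n : ℕ) {ε : ℝ} (hε : 0 ≤ ε) (t : ParamSpace n) : t ≤ tr n ε t := by
  intro i
  simpa [tr] using hε

lemma le_tr_tr (n : ℕ) {ε : ℝ} (hε : 0 ≤ ε) (t : ParamSpace n) :
    t ≤ tr n ε (tr n ε t) :=
  le_trans (le_tr n hε t) (le_tr n hε (tr n ε t))

lemma le_tr_two (n : ℕ) {ε : ℝ} (hε : 0 ≤ ε) {a b : ParamSpace n} (hab : a ≤ b) :
    a ≤ tr n (2 * ε) b := by
  intro i
  have : (0:ℝ) ≤ 2 * ε := by positivity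
  calc a i ≤ b i := hab i
  _ ≤ b i + 2 * ε := by linarith

/-- The shift functor `S_ε` on the poset category `ℝⁿ`, induced by the monotone
map `t ↦ t + ε·𝟙`. -/
def shiftFunctor (n : ℕ) (ε : ℝ) : ParamSpace n ⥤ ParamSpace n :=
  (tr_mono n ε).functor

lemma stmt7_aux (F : Type) [Field F] (n : ℕ) (ε : ℝ) (hε : 0 ≤ ε)
    (M N : ParamSpace n ⥤ ModuleCat F)
    (hfdN : ∀ t : ParamSpace n, FiniteDimensional F (N.obj t))
    (φ : M ⟶ shiftFunctor n ε ⋙ N) (ψ : N ⟶ shiftFunctor n ε ⋙ M)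
    (hMM : ∀ t : ParamSpace n,
      φ.app t ≫ ψ.app (tr n ε t) = M.map (homOfLE (le_tr_tr n hε t)))
    (a b c : ParamSpace n) (hab : a ≤ b) (hc : c = tr n ε (tr n ε b)) (h : a ≤ c) :
    Module.finrank F (LinearMap.range (ModuleCat.Hom.hom (M.map (homOfLE h)))) ≤
      Module.finrank F (LinearMap.range (ModuleCat.Hom.hom (N.map (homOfLE (tr_mono n ε hab))))) := by
  subst hc
  have hfact : φ.app a ≫ N.map (homOfLE (tr_mono n ε hab)) ≫ ψ.app (tr n ε b) =
      M.map (homOfLE h) := by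
    erw [ψ.naturality (homOfLE (tr_mono n ε hab)), ← Category.assoc, hMM a,
      Functor.comp_map, ← M.map_comp]
    congr 1
  haveI := hfdN (tr n ε b)
  haveI : FiniteDimensional F
      (LinearMap.range (ModuleCat.Hom.hom (N.map (homOfLE (tr_mono n ε hab))))) :=
    FiniteDimensional.finiteDimensional_submodule _
  erw [← hfact, ModuleCat.hom_comp, ModuleCat.hom_comp, LinearMap.comp_assoc,
    LinearMap.range_comp]
  refine le_trans (Submodule.finrank_map_le _ _) ?_
  exact Submodule.finrank_mono (LinearMap.range_comp_le_range _ _)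

theorem stmt7 (F : Type) [Field F] (n : ℕ) (ε : ℝ) (hε : 0 ≤ ε)
    (M N : ParamSpace n ⥤ ModuleCat F)
    (hfdM : ∀ t : ParamSpace n, FiniteDimensional F (M.obj t))
    (hfdN : ∀ t : ParamSpace n, FiniteDimensional F (N.obj t))
    (φ : M ⟶ shiftFunctor n ε ⋙ N) (ψ : N ⟶ shiftFunctor n ε ⋙ M)
    (hMM : ∀ t : ParamSpace n,
      φ.app t ≫ ψ.app (tr n ε t) = M.map (homOfLE (le_tr_tr n hε t)))
    (hNN : ∀ t : ParamSpace n,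
      ψ.app t ≫ φ.app (tr n ε t) = N.map (homOfLE (le_tr_tr n hε t)))
    (a b : ParamSpace n) (hab : a ≤ b) :
    Module.finrank F
        (LinearMap.range (ModuleCat.Hom.hom (M.map (homOfLE (le_tr_two n hε hab))))) ≤
      Module.finrank F
        (LinearMap.range (ModuleCat.Hom.hom (N.map (homOfLE (tr_mono n ε hab))))) ∧
    Module.finrank F
        (LinearMap.range (ModuleCat.Hom.hom (N.map (homOfLE (le_tr_two n hε hab))))) ≤
      Module.finrank F
        (LinearMap.range (ModuleCat.Hom.hom (M.map (homOfLE (tr_mono n ε hab))))) := by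
  have hc : tr n (2 * ε) b = tr n ε (tr n ε b) := by
    funext i; simp [tr]; ring
  exact ⟨stmt7_aux F n ε hε M N hfdN φ ψ hMM a b _ hab hc _,
    stmt7_aux F n ε hε N M hfdM ψ φ hNN a b _ hab hc _⟩
end

section
/- Let F be a field. There exist pointwise finite-dimensional 2-parameter persistence modules M, N : (ℝ², ≤) ⥤ ModuleCat F that have identical rank invariants — i.e. for all a ≤ b in ℝ², rank M(a ≤ b) = rank N(a ≤ b) — but are not isomorphic in the functor category (there is no natural isomorphism M ≅ N). Hence the rank invariant is not a complete invariant of 2-parameter persistence modules. -/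
open CategoryTheory

universe u

open Classical in
/-- A line `F` or `0` depending on a proposition. -/
noncomputable def subLine (F : Type) [Field F] (P : Prop) : Submodule F F :=
  if P then ⊤ else ⊥

lemma subLine_mono (F : Type) [Field F] {P Q : Prop} (h : P → Q) :
    subLine F P ≤ subLine F Q := by
  classical
  unfold subLine
  split_ifs with hP hQ
  · exact le_rfl
  · exact absurd (h hP) hQ
  · exact bot_le
  · exact le_rfl

lemma subLine_eq_top (F : Type) [Field F] {P : Prop} (hP : P) : subLine F P = ⊤ := by
  classical
  unfold subLine; rw [if_pos hP]

lemma subLine_eq_bot (F : Type) [Field F] {P : Prop} (hP : ¬ P) : subLine F P = ⊥ := by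
  classical
  unfold subLine; rw [if_neg hP]

open Classical in
lemma finrank_subLine (F : Type) [Field F] (P : Prop) :
    Module.finrank F (subLine F P) = if P then 1 else 0 := by
  by_cases hP : P
  · rw [subLine_eq_top F hP, if_pos hP, finrank_top]
    exact Module.finrank_self F
  · rw [subLine_eq_bot F hP, if_neg hP]
    exact finrank_bot F F

lemma mem_subLine_of (F : Type) [Field F] {P : Prop} (hP : P) (x : F) :
    x ∈ subLine F P := by
  classical
  unfold subLine; rw [if_pos hP]; trivial

lemma subLine_eq_zero (F : Type) [Field F] {P : Prop} (hP : ¬ P) {x : F}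
    (hx : x ∈ subLine F P) : x = 0 := by
  classical
  unfold subLine at hx; rw [if_neg hP] at hx; exact (Submodule.mem_bot F).1 hx

/-- `s.prod t` is linearly equivalent to `s × t`. -/
def prodEquivSub (F : Type) [Field F] (s t : Submodule F F) :
    (s.prod t) ≃ₗ[F] s × t where
  toFun x := (⟨x.1.1, (Submodule.mem_prod.mp x.2).1⟩, ⟨x.1.2, (Submodule.mem_prod.mp x.2).2⟩)
  invFun y := ⟨(y.1.1, y.2.1), Submodule.mem_prod.mpr ⟨y.1.2, y.2.2⟩⟩
  map_add' _ _ := rfl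
  map_smul' _ _ := rfl
  left_inv _ := rfl
  right_inv _ := rfl

open Classical in
lemma finrank_prodSub (F : Type) [Field F] (P Q : Prop) :
    Module.finrank F ((subLine F P).prod (subLine F Q)) =
      (if P then 1 else 0) + (if Q then 1 else 0) := by
  rw [LinearEquiv.finrank_eq (prodEquivSub F (subLine F P) (subLine F Q)),
    Module.finrank_prod, finrank_subLine, finrank_subLine]

/-- The persistence module given by two monotone (upward-closed) predicates,
realized as a sub-functor of the constant functor `F × F` (lifted to universe `u`). -/
noncomputable def pairFun (F : Type) [Field F] (U V : ParamSpace 2 → Prop)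
    (hU : ∀ ⦃a b : ParamSpace 2⦄, a ≤ b → U a → U b)
    (hV : ∀ ⦃a b : ParamSpace 2⦄, a ≤ b → V a → V b) :
    ParamSpace 2 ⥤ ModuleCat.{u} F where
  obj t := ModuleCat.of F (ULift.{u} ((subLine F (U t)).prod (subLine F (V t))))
  map {a b} f := ModuleCat.ofHom
    (ULift.moduleEquiv.symm.toLinearMap ∘ₗ
      (Submodule.inclusion (Submodule.prod_mono (subLine_mono F (hU (leOfHom f)))
        (subLine_mono F (hV (leOfHom f))))) ∘ₗ ULift.moduleEquiv.toLinearMap)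
  map_id _ := rfl
  map_comp _ _ := rfl

lemma pairFun_map_injective (F : Type) [Field F] (U V : ParamSpace 2 → Prop)
    (hU : ∀ ⦃a b : ParamSpace 2⦄, a ≤ b → U a → U b)
    (hV : ∀ ⦃a b : ParamSpace 2⦄, a ≤ b → V a → V b)
    {a b : ParamSpace 2} (h : a ≤ b) :
    Function.Injective ((pairFun.{u} F U V hU hV).map (homOfLE h)) := by
  intro x y hxy
  have hd : ULift.down x = ULift.down y :=
    Submodule.inclusion_injective (Submodule.prod_mono (subLine_mono F (hU h))
      (subLine_mono F (hV h))) (congrArg ULift.down hxy)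
  exact congrArg ULift.up hd

theorem stmt10 (F : Type) [Field F] :
    ∃ (M N : ParamSpace 2 ⥤ ModuleCat F),
      (∀ t : ParamSpace 2, FiniteDimensional F (M.obj t)) ∧
      (∀ t : ParamSpace 2, FiniteDimensional F (N.obj t)) ∧
      (∀ (a b : ParamSpace 2) (h : a ≤ b),
        Module.finrank F (LinearMap.range (M.map (homOfLE h)).hom) =
          Module.finrank F (LinearMap.range (N.map (homOfLE h)).hom)) ∧
      IsEmpty (M ≅ N) := by
  classical
  set p : ParamSpace 2 := fun i => if i.val = 0 then 1 else 0 with hp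
  set q : ParamSpace 2 := fun i => if i.val = 0 then 0 else 1 with hq
  set b : ParamSpace 2 := fun _ => 1 with hb
  have hUp : ∀ ⦃a c : ParamSpace 2⦄, a ≤ c → p ≤ a → p ≤ c :=
    fun a c h h' => le_trans h' h
  have hUq : ∀ ⦃a c : ParamSpace 2⦄, a ≤ c → q ≤ a → q ≤ c :=
    fun a c h h' => le_trans h' h
  have hUor : ∀ ⦃a c : ParamSpace 2⦄, a ≤ c → (p ≤ a ∨ q ≤ a) → (p ≤ c ∨ q ≤ c) :=
    fun a c h h' => h'.imp (fun h'' => le_trans h'' h) (fun h'' => le_trans h'' h)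
  have hUand : ∀ ⦃a c : ParamSpace 2⦄, a ≤ c → (p ≤ a ∧ q ≤ a) → (p ≤ c ∧ q ≤ c) :=
    fun a c h h' => ⟨le_trans h'.1 h, le_trans h'.2 h⟩
  refine ⟨pairFun F (fun t => p ≤ t) (fun t => q ≤ t) hUp hUq,
    pairFun F (fun t => p ≤ t ∨ q ≤ t) (fun t => p ≤ t ∧ q ≤ t) hUor hUand,
    fun t => ULift.moduleEquiv.symm.finiteDimensional,
    fun t => ULift.moduleEquiv.symm.finiteDimensional, ?_, ?_⟩
  · -- equal rank invariants
    intro a c h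
    have hM : Module.finrank F (LinearMap.range
        ((pairFun F (fun t => p ≤ t) (fun t => q ≤ t) hUp hUq).map (homOfLE h)).hom) =
        Module.finrank F
          (ULift ((subLine F (p ≤ a)).prod (subLine F (q ≤ a)))) :=
      LinearMap.finrank_range_of_inj (pairFun_map_injective F _ _ hUp hUq h)
    have hN : Module.finrank F (LinearMap.range
        ((pairFun F (fun t => p ≤ t ∨ q ≤ t) (fun t => p ≤ t ∧ q ≤ t) hUor hUand).map
          (homOfLE h)).hom) =
        Module.finrank F
          (ULift ((subLine F (p ≤ a ∨ q ≤ a)).prod (subLine F (p ≤ a ∧ q ≤ a)))) :=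
      LinearMap.finrank_range_of_inj (pairFun_map_injective F _ _ hUor hUand h)
    have eM : Module.finrank F
        (ULift ((subLine F (p ≤ a)).prod (subLine F (q ≤ a)))) =
        Module.finrank F ((subLine F (p ≤ a)).prod (subLine F (q ≤ a))) :=
      LinearEquiv.finrank_eq ULift.moduleEquiv
    have eN : Module.finrank F
        (ULift ((subLine F (p ≤ a ∨ q ≤ a)).prod (subLine F (p ≤ a ∧ q ≤ a)))) =
        Module.finrank F ((subLine F (p ≤ a ∨ q ≤ a)).prod (subLine F (p ≤ a ∧ q ≤ a))) :=
      LinearEquiv.finrank_eq ULift.moduleEquiv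
    rw [hM, hN, eM, eN, finrank_prodSub, finrank_prodSub]
    by_cases h1 : p ≤ a <;> by_cases h2 : q ≤ a <;> simp [h1, h2]
  · -- not isomorphic
    constructor
    intro e
    have hpb : p ≤ b := by
      intro i; simp only [hp, hb]; split_ifs <;> norm_num
    have hqb : q ≤ b := by
      intro i; simp only [hq, hb]; split_ifs <;> norm_num
    have hqp : ¬ q ≤ p := by
      intro h
      have := h 1
      norm_num [hp, hq] at this
    have hpq : ¬ p ≤ q := by
      intro h
      have := h 0
      norm_num [hp, hq] at this
    set M := pairFun F (fun t => p ≤ t) (fun t => q ≤ t) hUp hUq with hM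
    set N := pairFun F (fun t => p ≤ t ∨ q ≤ t) (fun t => p ≤ t ∧ q ≤ t) hUor hUand with hN
    have hXmem : ((1 : F), (0 : F)) ∈ (subLine F (p ≤ p)).prod (subLine F (q ≤ p)) :=
      Submodule.mem_prod.mpr ⟨mem_subLine_of F le_rfl 1, Submodule.zero_mem _⟩
    have hYmem : ((0 : F), (1 : F)) ∈ (subLine F (p ≤ q)).prod (subLine F (q ≤ q)) :=
      Submodule.mem_prod.mpr ⟨Submodule.zero_mem _, mem_subLine_of F le_rfl 1⟩
    set X' : M.obj p := ULift.up ⟨((1 : F), (0 : F)), hXmem⟩ with hX'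
    set Y' : M.obj q := ULift.up ⟨((0 : F), (1 : F)), hYmem⟩ with hY'
    set X : M.obj b := M.map (homOfLE hpb) X' with hX
    set Y : M.obj b := M.map (homOfLE hqb) Y' with hY
    set φ := e.hom.app b with hφ
    -- values of elements of `N.obj b` in `F × F`
    have hsecond : ∀ (a : ParamSpace 2) (ha : a ≤ b) (hand : ¬ (p ≤ a ∧ q ≤ a))
        (v : M.obj a),
        ((Subtype.val (ULift.down (φ (M.map (homOfLE ha) v))) : F × F)).2 = 0 := by
      intro a ha hand v
      have hnat := e.hom.naturality (homOfLE ha)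
      have h1 : φ (M.map (homOfLE ha) v) = N.map (homOfLE ha) (e.hom.app a v) := by
        exact congrArg (fun f : M.obj a ⟶ N.obj b => f v) hnat
      rw [h1]
      exact subLine_eq_zero F hand
        (Submodule.mem_prod.mp (ULift.down (e.hom.app a v)).2).2
    have hφX : ((Subtype.val (ULift.down (φ X)) : F × F)).2 = 0 := hsecond p hpb (fun h => hqp h.2) X'
    have hφY : ((Subtype.val (ULift.down (φ Y)) : F × F)).2 = 0 := hsecond q hqb (fun h => hpq h.1) Y'
    have hzmem : ((0 : F), (1 : F)) ∈ (subLine F ((p ≤ b) ∨ q ≤ b)).prod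
        (subLine F ((p ≤ b) ∧ q ≤ b)) :=
      Submodule.mem_prod.mpr ⟨Submodule.zero_mem _, mem_subLine_of F ⟨hpb, hqb⟩ 1⟩
    set z : N.obj b := ULift.up ⟨((0 : F), (1 : F)), hzmem⟩ with hz
    set w : M.obj b := e.inv.app b z with hwdef
    have hφw : φ w = z := by
      exact congrArg (fun f : N.obj b ⟶ N.obj b => f z) (e.inv_hom_id_app b)
    set c1 : F := ((Subtype.val (ULift.down w) : F × F)).1 with hc1
    set c2 : F := ((Subtype.val (ULift.down w) : F × F)).2 with hc2
    have hdecomp : w = c1 • X + c2 • Y := by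
      have hdown : ULift.down w = ULift.down (c1 • X + c2 • Y : M.obj b) := by
        apply Subtype.ext
        have hXval : ((Subtype.val (ULift.down X) : F × F)) = ((1 : F), (0 : F)) := rfl
        have hYval : ((Subtype.val (ULift.down Y) : F × F)) = ((0 : F), (1 : F)) := rfl
        show ((Subtype.val (ULift.down w) : F × F)) = ((Subtype.val (ULift.down (c1 • X + c2 • Y : M.obj b)) : F × F))
        have : (Subtype.val (ULift.down (c1 • X + c2 • Y : M.obj b)) : F × F) =
            c1 • (Subtype.val (ULift.down X) : F × F) + c2 • (Subtype.val (ULift.down Y) : F × F) := rfl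
        rw [this, hXval, hYval]
        ext
        · simp [hc1]
        · simp [hc2]
      exact congrArg ULift.up hdown
    have : (1 : F) = 0 := by
      have h1 : φ w = c1 • φ X + c2 • φ Y := by
        rw [hdecomp, map_add, map_smul, map_smul]
      have h2 := congrArg (fun v : N.obj b => ((Subtype.val (ULift.down v) : F × F)).2) h1
      simp only [hφw] at h2
      have hsum : ((Subtype.val (ULift.down (c1 • φ X + c2 • φ Y : N.obj b)) : F × F)).2 =
          c1 • ((Subtype.val (ULift.down (φ X)) : F × F)).2 + c2 • ((Subtype.val (ULift.down (φ Y)) : F × F)).2 := rfl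
      rw [hsum, hφX, hφY] at h2
      simpa [hz] using h2
    exact one_ne_zero this
end
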